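/- Let ν = μ ∘ T^{-1} be the decimation of a measure μ on {-1,+1}^{ℤ²} under (Tω)_i = ω_{2i}, and let f'(σ') = σ'_{(0,0)}. Then for ν-almost every ω', ν[f' | ℱ'_{{(0,0)}^c}](ω') = μ[σ_{(0,0)} | ℱ_{S^c}](ω) for any ω ∈ T^{-1}{ω'}, where S^c = (2ℤ²) ∩ {(0,0)}^c, i.e. the conditional expectation of the image spin at the origin given all other image spins equals the conditional expectation of the original spin at the origin given all even-site spins other than the origin. -/
import Mathlib


open MeasureTheory

/-- Auxiliary: conditional expectation transfers along a measurable map.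
If `ν = μ.map T` and `m₂ ≤ mβ`, then `ν[f|m₂] ∘ T = μ[f ∘ T | m₂.comap T]` a.e. -/
theorem condexp_comp_map_aux {α β : Type*} {m₂ : MeasurableSpace β}
    [mα : MeasurableSpace α] [mβ : MeasurableSpace β]
    (hm₂ : m₂ ≤ mβ) (μ : Measure α) [IsProbabilityMeasure μ]
    {T : α → β} (hT : Measurable T) {f : β → ℝ}
    (hf : Integrable f (μ.map T)) :
    (fun ω => ((μ.map T)[f | m₂]) (T ω)) =ᵐ[μ]
      μ[(fun ω => f (T ω)) | m₂.comap T] := by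
  have hν : IsProbabilityMeasure (μ.map T) := Measure.isProbabilityMeasure_map hT.aemeasurable
  have hmle : m₂.comap T ≤ mα := by
    calc m₂.comap T ≤ mβ.comap T := MeasurableSpace.comap_mono hm₂
      _ ≤ mα := hT.comap_le
  have hfT : Integrable (fun ω => f (T ω)) μ :=
    (integrable_map_measure hf.1 hT.aemeasurable).mp hf
  have hcondSM : StronglyMeasurable[m₂] ((μ.map T)[f | m₂]) := stronglyMeasurable_condExp
  have hcondAESM : AEStronglyMeasurable ((μ.map T)[f | m₂]) (μ.map T) :=
    (hcondSM.mono hm₂).aestronglyMeasurable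
  have hgInt : Integrable (fun ω => ((μ.map T)[f | m₂]) (T ω)) μ :=
    (integrable_map_measure hcondAESM hT.aemeasurable).mp integrable_condExp
  refine ae_eq_condExp_of_forall_setIntegral_eq hmle hfT
    (fun s _ _ => hgInt.integrableOn) ?_ ?_
  · intro s hs _
    obtain ⟨t, ht, rfl⟩ := hs
    have htβ : MeasurableSet t := hm₂ t ht
    have h1 : ∫ ω in T ⁻¹' t, ((μ.map T)[f | m₂]) (T ω) ∂μ
        = ∫ σ' in t, ((μ.map T)[f | m₂]) σ' ∂(μ.map T) :=
      (setIntegral_map htβ hcondAESM hT.aemeasurable).symm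
    have h2 : ∫ σ' in t, ((μ.map T)[f | m₂]) σ' ∂(μ.map T) = ∫ σ' in t, f σ' ∂(μ.map T) :=
      setIntegral_condExp hm₂ hf ht
    have h3 : ∫ σ' in t, f σ' ∂(μ.map T) = ∫ ω in T ⁻¹' t, f (T ω) ∂μ :=
      setIntegral_map htβ hf.1 hT.aemeasurable
    rw [h1, h2, h3]
  · exact StronglyMeasurable.aestronglyMeasurable
      (hcondSM.comp_measurable (Measurable.of_comap_le le_rfl))

/-- Transfer of conditional expectations under decimation: for ν = μ∘T⁻¹ with
(Tω)_i = ω_{2i} and f'(σ') = σ'_{(0,0)}, the conditional expectation of the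
image spin at the origin given all other image spins, pulled back by T, agrees
μ-a.e. with the conditional expectation of the original spin at the origin
given the spins on S^c = (2ℤ²) ∖ {(0,0)}. -/
theorem stmt14 (μ : Measure ((ℤ × ℤ) → Bool)) [IsProbabilityMeasure μ] :
    let T : ((ℤ × ℤ) → Bool) → ((ℤ × ℤ) → Bool) :=
      fun ω i => ω (2 * i.1, 2 * i.2)
    let f' : ((ℤ × ℤ) → Bool) → ℝ := fun σ' => if σ' (0, 0) then 1 else -1
    let Sc : Set (ℤ × ℤ) := {j | j ≠ (0, 0) ∧ ∃ i : ℤ × ℤ, j = (2 * i.1, 2 * i.2)}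
    (fun ω => ((μ.map T)[f' |
        MeasurableSpace.comap
          (fun (ω' : (ℤ × ℤ) → Bool) (i : {i : ℤ × ℤ // i ≠ (0, 0)}) => ω' i.1)
          inferInstance]) (T ω))
      =ᵐ[μ]
    μ[(fun ω => f' (T ω)) |
        MeasurableSpace.comap
          (fun (ω : (ℤ × ℤ) → Bool) (j : Sc) => ω j.1) inferInstance] := by
  intro T f' Sc
  classical
  have hT : Measurable T := measurable_pi_lambda _ fun i => measurable_pi_apply _
  have hf' : Measurable f' := by
    have : Measurable fun σ' : (ℤ × ℤ) → Bool => σ' (0, 0) := measurable_pi_apply _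
    exact (Measurable.of_discrete (f := fun b : Bool => if b then (1:ℝ) else -1)).comp this
  -- the index bijection i ↦ 2i from {i ≠ 0} to Sc
  have htwo : ∀ i j : ℤ × ℤ, (2 * i.1, 2 * i.2) = ((2 * j.1, 2 * j.2) : ℤ × ℤ) → i = j := by
    intro i j h
    have h1 : 2 * i.1 = 2 * j.1 := congrArg Prod.fst h
    have h2 : 2 * i.2 = 2 * j.2 := congrArg Prod.snd h
    have := mul_left_cancel₀ (by norm_num : (2:ℤ) ≠ 0) h1
    have := mul_left_cancel₀ (by norm_num : (2:ℤ) ≠ 0) h2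
    exact Prod.ext ‹i.1 = j.1› ‹i.2 = j.2›
  let φ : {i : ℤ × ℤ // i ≠ (0, 0)} → Sc := fun i =>
    ⟨(2 * i.1.1, 2 * i.1.2), by
      refine ⟨?_, ⟨i.1, rfl⟩⟩
      intro h
      exact i.2 (htwo i.1 (0,0) (by simpa using h))⟩
  have hφsurj : Function.Surjective φ := by
    rintro ⟨j, hj0, i, rfl⟩
    refine ⟨⟨i, ?_⟩, rfl⟩
    intro h; apply hj0; simp [h]
  -- equality of the two sub-σ-algebras
  have hmeq : (MeasurableSpace.comap (fun (ω : (ℤ × ℤ) → Bool) (j : Sc) => ω j.1)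
        inferInstance : MeasurableSpace ((ℤ × ℤ) → Bool))
      = (MeasurableSpace.comap
          (fun (ω' : (ℤ × ℤ) → Bool) (i : {i : ℤ × ℤ // i ≠ (0, 0)}) => ω' i.1)
          inferInstance).comap T := by
    rw [MeasurableSpace.comap_comp]
    have hcomp : (fun (ω' : (ℤ × ℤ) → Bool)
        (i : {i : ℤ × ℤ // i ≠ (0, 0)}) => ω' i.1) ∘ T
        = fun ω i => ω (φ i).1 := rfl
    rw [hcomp]
    apply le_antisymm
    · let ψ : Sc → {i : ℤ × ℤ // i ≠ (0, 0)} := fun j => (hφsurj j).choose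
      have hψ : ∀ j, φ (ψ j) = j := fun j => (hφsurj j).choose_spec
      have : (fun (ω : (ℤ × ℤ) → Bool) (j : Sc) => ω j.1)
          = (fun (g : {i : ℤ × ℤ // i ≠ (0, 0)} → Bool) (j : Sc) => g (ψ j))
            ∘ (fun ω i => ω (φ i).1) := by
        funext ω j
        exact (congrArg ω (congrArg Subtype.val (hψ j))).symm
      rw [this, ← MeasurableSpace.comap_comp]
      exact MeasurableSpace.comap_mono
        (Measurable.comap_le (measurable_pi_lambda _ fun j => measurable_pi_apply _))
    · have : (fun (ω : (ℤ × ℤ) → Bool) (i : {i : ℤ × ℤ // i ≠ (0, 0)}) => ω (φ i).1)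
          = (fun (g : Sc → Bool) (i : {i : ℤ × ℤ // i ≠ (0, 0)}) => g (φ i))
            ∘ (fun (ω : (ℤ × ℤ) → Bool) (j : Sc) => ω j.1) := rfl
      rw [this, ← MeasurableSpace.comap_comp]
      exact MeasurableSpace.comap_mono
        (Measurable.comap_le (measurable_pi_lambda _ fun i => measurable_pi_apply _))
  rw [hmeq]
  have hm₂le : (MeasurableSpace.comap
      (fun (ω' : (ℤ × ℤ) → Bool) (i : {i : ℤ × ℤ // i ≠ (0, 0)}) => ω' i.1)
      inferInstance : MeasurableSpace ((ℤ × ℤ) → Bool)) ≤ MeasurableSpace.pi :=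
    Measurable.comap_le (measurable_pi_lambda _ fun i => measurable_pi_apply _)
  have hν : IsProbabilityMeasure (μ.map T) := Measure.isProbabilityMeasure_map hT.aemeasurable
  have hfInt : Integrable f' (μ.map T) := by
    refine Integrable.mono' (integrable_const 1) hf'.aestronglyMeasurable ?_
    filter_upwards with σ'
    show |f' σ'| ≤ 1
    by_cases h : σ' (0, 0) <;> simp only [f', h, if_true, if_false] <;> norm_num
  exact condexp_comp_map_aux hm₂le μ hT hfInt
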